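/- arXiv:1601.05047 — 8 statements merged into one kernel-verified Lean document; each statement's English description precedes it below -/
import Mathlib

section
/- If two sub-distributions μ₁, μ₂ over a countable set B admit a coupling μ (a sub-distribution over B × B with first marginal μ₁ and second marginal μ₂) whose support is contained in the relation {(x₁,x₂) | x₁ ∈ E₁ → x₂ ∈ E₂}, then Pr_{x←μ₁}[x ∈ E₁] ≤ Pr_{x←μ₂}[x ∈ E₂]. -/
open scoped ENNReal

noncomputable section

/-- Total mass of a discrete sub-distribution. -/
def mass {B : Type*} (μ : B → ℝ≥0∞) : ℝ≥0∞ := ∑' b, μ b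

/-- Probability of an event. -/
def pr {B : Type*} (μ : B → ℝ≥0∞) (E : Set B) : ℝ≥0∞ := ∑' b : E, μ b

/-- First marginal. -/
def marg₁ {B₁ B₂ : Type*} (μ : B₁ × B₂ → ℝ≥0∞) : B₁ → ℝ≥0∞ :=
  fun b₁ => ∑' b₂, μ (b₁, b₂)

/-- Second marginal. -/
def marg₂ {B₁ B₂ : Type*} (μ : B₁ × B₂ → ℝ≥0∞) : B₂ → ℝ≥0∞ :=
  fun b₂ => ∑' b₁, μ (b₁, b₂)

/-- ε-DP divergence. -/
def dpDiv {B : Type*} (ε : ℝ) (μ₁ μ₂ : B → ℝ≥0∞) : ℝ≥0∞ :=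
  ⨆ E : Set B, pr μ₁ E - ENNReal.ofReal (Real.exp ε) * pr μ₂ E

/-- (ε,δ)-approximate lifting of a relation Ψ. -/
def ALift {B₁ B₂ : Type*} (ε : ℝ) (δ : ℝ≥0∞) (Ψ : Set (B₁ × B₂))
    (μ₁ : B₁ → ℝ≥0∞) (μ₂ : B₂ → ℝ≥0∞) : Prop :=
  ∃ μL μR : B₁ × B₂ → ℝ≥0∞,
    mass μL ≤ 1 ∧ mass μR ≤ 1 ∧
    marg₁ μL = μ₁ ∧ marg₂ μR = μ₂ ∧
    (∀ p, μL p ≠ 0 → p ∈ Ψ) ∧ (∀ p, μR p ≠ 0 → p ∈ Ψ) ∧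
    dpDiv ε μL μR ≤ δ

theorem stmt_0 {B : Type*} [Countable B] (μ₁ μ₂ : B → ℝ≥0∞) (E₁ E₂ : Set B)
    (hμ₁ : mass μ₁ ≤ 1) (hμ₂ : mass μ₂ ≤ 1)
    (μ : B × B → ℝ≥0∞) (hμ : mass μ ≤ 1)
    (h₁ : marg₁ μ = μ₁) (h₂ : marg₂ μ = μ₂)
    (hsupp : ∀ p : B × B, μ p ≠ 0 → (p.1 ∈ E₁ → p.2 ∈ E₂)) :
    pr μ₁ E₁ ≤ pr μ₂ E₂ := by
  subst h₁ h₂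
  have key : ∀ b₁ : E₁, marg₁ μ ↑b₁ = ∑' b₂ : E₂, μ (↑b₁, ↑b₂) := fun b₁ =>
    (tsum_subtype_eq_of_support_subset (fun b₂ hb₂ => hsupp (↑b₁, b₂) hb₂ b₁.2)).symm
  have h3 : pr (marg₁ μ) E₁ = ∑' b₁ : E₁, ∑' b₂ : E₂, μ (↑b₁, ↑b₂) := tsum_congr key
  have h4 : pr (marg₂ μ) E₂ = ∑' b₂ : E₂, ∑' b₁ : B, μ (b₁, ↑b₂) := rfl
  rw [h3, h4, ENNReal.tsum_comm]
  refine ENNReal.tsum_le_tsum fun b₂ => ?_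
  exact Summable.tsum_le_tsum_of_inj (fun b₁ : E₁ => (b₁ : B)) Subtype.val_injective
    (fun _ _ => zero_le) (fun _ => le_rfl) ENNReal.summable ENNReal.summable
end
end

section
/- For ε ≥ 0, the ε-DP divergence Δ_ε(μ₁,μ₂) = sup over events E of (Pr_{μ₁}[E] − exp(ε)·Pr_{μ₂}[E]) satisfies: Δ_ε(μ₁,μ₂) ≤ δ if and only if for every point b, μ₁(b) ≤ exp(ε)·μ₂(b) + δ_b for some nonnegative family (δ_b) with ∑_b δ_b ≤ δ. -/
open scoped ENNReal

noncomputable section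

theorem my_tsum_sub {α : Type*} {f g : α → ℝ≥0∞} (h₁ : ∑' i, g i ≠ ∞) (h₂ : g ≤ f) :
    ∑' i, (f i - g i) = ∑' i, f i - ∑' i, g i := by
  refine ENNReal.eq_sub_of_add_eq h₁ ?_
  rw [← ENNReal.tsum_add]
  exact tsum_congr fun i => tsub_add_cancel_of_le (h₂ i)

theorem stmt_4 {B : Type*} [Countable B] (ε : ℝ) (hε : 0 ≤ ε) (δ : ℝ≥0∞)
    (μ₁ μ₂ : B → ℝ≥0∞) (hμ₁ : mass μ₁ ≤ 1) (hμ₂ : mass μ₂ ≤ 1) :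
    dpDiv ε μ₁ μ₂ ≤ δ ↔
      ∃ δb : B → ℝ≥0∞, (∑' b, δb b) ≤ δ ∧
        ∀ b : B, μ₁ b ≤ ENNReal.ofReal (Real.exp ε) * μ₂ b + δb b := by
  set c : ℝ≥0∞ := ENNReal.ofReal (Real.exp ε) with hc
  have hcfin : c ≠ ∞ := ENNReal.ofReal_ne_top
  constructor
  · intro hdp
    refine ⟨fun b => μ₁ b - c * μ₂ b, ?_, fun b => le_add_tsub⟩
    set E : Set B := {b | c * μ₂ b < μ₁ b} with hE
    have hsupp : Function.support (fun b => μ₁ b - c * μ₂ b) ⊆ E := by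
      intro b hb
      by_contra h
      exact hb (tsub_eq_zero_of_le (not_lt.mp h))
    have h1 : (∑' b, (μ₁ b - c * μ₂ b)) = ∑' b : E, (μ₁ b - c * μ₂ b) :=
      (tsum_subtype_eq_of_support_subset hsupp).symm
    have hfin : (∑' b : E, c * μ₂ b) ≠ ∞ := by
      rw [ENNReal.tsum_mul_left]
      refine ENNReal.mul_ne_top hcfin ?_
      have : (∑' b : E, μ₂ b) ≤ mass μ₂ := by
        rw [tsum_subtype]
        exact ENNReal.tsum_le_tsum fun b => Set.indicator_le_self _ _ b
      exact ne_top_of_le_ne_top (by simp) (this.trans hμ₂)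
    have h2 : (∑' b : E, (μ₁ b - c * μ₂ b)) = pr μ₁ E - c * pr μ₂ E := by
      rw [my_tsum_sub hfin (fun b => (b.2 : c * μ₂ b.1 < μ₁ b.1).le)]
      rw [pr, pr, ENNReal.tsum_mul_left]
    rw [h1, h2]
    exact le_trans (le_iSup (fun E => pr μ₁ E - c * pr μ₂ E) E) hdp
  · rintro ⟨δb, hsum, hpt⟩
    refine iSup_le fun E => ?_
    rw [tsub_le_iff_right]
    calc pr μ₁ E ≤ ∑' b : E, (c * μ₂ b + δb b) :=
          ENNReal.tsum_le_tsum fun b => hpt b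
      _ = c * pr μ₂ E + ∑' b : E, δb b := by
          rw [ENNReal.tsum_add, ENNReal.tsum_mul_left]; rfl
      _ ≤ δ + c * pr μ₂ E := by
          rw [add_comm δ]
          refine add_le_add_right (le_trans ?_ hsum) _
          rw [tsum_subtype]
          exact ENNReal.tsum_le_tsum fun b => Set.indicator_le_self _ _ b
end
end

section
/- For full distributions μ₁ ∈ Distr(B₁), μ₂ ∈ Distr(B₂) and a relation Ψ ⊆ B₁ × B₂: μ₁ and μ₂ are related by the exact lifting of Ψ (there is a coupling supported in Ψ) if and only if they are related by the (0,0)-approximate lifting of Ψ (there exist witnesses μ_L, μ_R supported in Ψ with π₁(μ_L) = μ₁, π₂(μ_R) = μ₂, and Δ₀(μ_L, μ_R) ≤ 0). -/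
open scoped ENNReal

noncomputable section

lemma mass_marg₁ {B₁ B₂ : Type*} (μ : B₁ × B₂ → ℝ≥0∞) : mass (marg₁ μ) = mass μ := by
  simp only [mass, marg₁]; exact (ENNReal.tsum_prod).symm

lemma pr_singleton {B : Type*} (μ : B → ℝ≥0∞) (b : B) : pr μ {b} = μ b := by
  rw [pr, tsum_subtype]
  rw [tsum_eq_single b (fun c hc => Set.indicator_of_notMem (by simpa using hc) μ)]
  exact Set.indicator_of_mem rfl μ

lemma dpDiv_le_zero {B : Type*} {μL μR : B → ℝ≥0∞} (h : dpDiv 0 μL μR ≤ 0)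
    (E : Set B) : pr μL E ≤ pr μR E := by
  have := le_trans (le_iSup _ E) h
  simpa [tsub_eq_zero_iff_le] using this

lemma exact_imp {B₁ B₂ : Type*} (μ₁ : B₁ → ℝ≥0∞) (μ₂ : B₂ → ℝ≥0∞)
    (hμ₁ : mass μ₁ = 1) (Ψ : Set (B₁ × B₂))
    (h : ∃ μ : B₁ × B₂ → ℝ≥0∞, marg₁ μ = μ₁ ∧ marg₂ μ = μ₂ ∧
        (∀ p, μ p ≠ 0 → p ∈ Ψ)) : ALift 0 0 Ψ μ₁ μ₂ := by
  obtain ⟨μ, h1, h2, h3⟩ := h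
  have hm : mass μ ≤ 1 := by rw [← mass_marg₁, h1, hμ₁]
  refine ⟨μ, μ, hm, hm, h1, h2, h3, h3, ?_⟩
  simp [dpDiv]

theorem stmt_7 {B₁ B₂ : Type*} [Countable B₁] [Countable B₂]
    (μ₁ : B₁ → ℝ≥0∞) (μ₂ : B₂ → ℝ≥0∞)
    (hμ₁ : mass μ₁ = 1) (hμ₂ : mass μ₂ = 1) (Ψ : Set (B₁ × B₂)) :
    (∃ μ : B₁ × B₂ → ℝ≥0∞, marg₁ μ = μ₁ ∧ marg₂ μ = μ₂ ∧
        (∀ p, μ p ≠ 0 → p ∈ Ψ)) ↔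
      ALift 0 0 Ψ μ₁ μ₂ := by
  constructor
  · exact exact_imp μ₁ μ₂ hμ₁ Ψ
  · rintro ⟨μL, μR, hmL, hmR, h1, h2, hsL, hsR, hd⟩
    have hle : ∀ p, μL p ≤ μR p := fun p => by
      simpa [pr_singleton] using dpDiv_le_zero hd {p}
    have hmassL : mass μL = 1 := by rw [← mass_marg₁, h1, hμ₁]
    have heq : μL = μR := by
      by_contra hne
      obtain ⟨p, hp⟩ : ∃ p, μL p ≠ μR p := Function.ne_iff.mp hne
      have hlt : μL p < μR p := lt_of_le_of_ne (hle p) hp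
      have : mass μL < mass μR :=
        ENNReal.tsum_lt_tsum (by rw [show tsum μL = mass μL from rfl, hmassL]; exact ENNReal.one_ne_top) hle hlt
      exact absurd (lt_of_lt_of_le this hmR) (by rw [hmassL]; exact lt_irrefl 1)
    exact ⟨μL, h1, heq ▸ h2, hsL⟩
end
end

section
/- If μ₁ ∈ SDistr(B₁) and μ₂ ∈ SDistr(B₂) are related by the (ε,δ)-approximate lifting of Ψ = {(x₁,x₂) | x₁ ∈ E₁ → x₂ ∈ E₂}, then Pr_{x₁←μ₁}[x₁ ∈ E₁] ≤ exp(ε)·Pr_{x₂←μ₂}[x₂ ∈ E₂] + δ. -/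
open scoped ENNReal

noncomputable section

lemma pr_indicator {B : Type*} (μ : B → ℝ≥0∞) (E : Set B) :
    pr μ E = ∑' b, E.indicator μ b := by
  rw [pr, tsum_subtype]

lemma pr_fst_preimage {B₁ B₂ : Type*} (μ : B₁ × B₂ → ℝ≥0∞) (E₁ : Set B₁) :
    pr μ (Prod.fst ⁻¹' E₁) = pr (marg₁ μ) E₁ := by
  rw [pr_indicator, pr_indicator]
  rw [ENNReal.tsum_prod']
  refine tsum_congr fun b₁ => ?_
  by_cases h : b₁ ∈ E₁
  · simp only [Set.indicator_of_mem h, marg₁]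
    refine tsum_congr fun b₂ => ?_
    rw [Set.indicator_of_mem (by exact h)]
  · simp only [Set.indicator_of_notMem h]
    refine ENNReal.summable.tsum_eq_zero_iff.2 fun b₂ => ?_
    rw [Set.indicator_of_notMem (by exact h)]

lemma pr_snd_preimage {B₁ B₂ : Type*} (μ : B₁ × B₂ → ℝ≥0∞) (E₂ : Set B₂) :
    pr μ (Prod.snd ⁻¹' E₂) = pr (marg₂ μ) E₂ := by
  rw [pr_indicator, pr_indicator]
  rw [ENNReal.tsum_prod', ENNReal.tsum_comm (f := fun b₁ b₂ => (Prod.snd ⁻¹' E₂).indicator μ (b₁, b₂))]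
  refine tsum_congr fun b₂ => ?_
  by_cases h : b₂ ∈ E₂
  · simp only [Set.indicator_of_mem h, marg₂]
    refine tsum_congr fun b₁ => ?_
    rw [Set.indicator_of_mem (by exact h)]
  · simp only [Set.indicator_of_notMem h]
    refine ENNReal.summable.tsum_eq_zero_iff.2 fun b₁ => ?_
    rw [Set.indicator_of_notMem (by exact h)]

theorem stmt_8 {B₁ B₂ : Type*} [Countable B₁] [Countable B₂]
    (ε : ℝ) (δ : ℝ≥0∞) (μ₁ : B₁ → ℝ≥0∞) (μ₂ : B₂ → ℝ≥0∞)
    (hμ₁ : mass μ₁ ≤ 1) (hμ₂ : mass μ₂ ≤ 1)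
    (E₁ : Set B₁) (E₂ : Set B₂)
    (h : ALift ε δ {p : B₁ × B₂ | p.1 ∈ E₁ → p.2 ∈ E₂} μ₁ μ₂) :
    pr μ₁ E₁ ≤ ENNReal.ofReal (Real.exp ε) * pr μ₂ E₂ + δ := by
  obtain ⟨μL, μR, _, _, hm1, hm2, _, hsuppR, hdiv⟩ := h
  set S : Set (B₁ × B₂) := Prod.fst ⁻¹' E₁
  have key : pr μL S - ENNReal.ofReal (Real.exp ε) * pr μR S ≤ δ :=
    le_trans (le_iSup (fun E => pr μL E - ENNReal.ofReal (Real.exp ε) * pr μR E) S) hdiv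
  have h1 : pr μL S = pr μ₁ E₁ := by rw [pr_fst_preimage, hm1]
  have h2 : pr μR S ≤ pr μ₂ E₂ := by
    rw [← hm2, ← pr_snd_preimage]
    rw [pr_indicator, pr_indicator]
    refine ENNReal.tsum_le_tsum fun p => ?_
    by_cases hp : p ∈ S
    · by_cases hz : μR p = 0
      · simp [Set.indicator, hz]
      · have : p ∈ Prod.snd ⁻¹' E₂ := hsuppR p hz hp
        rw [Set.indicator_of_mem hp, Set.indicator_of_mem this]
    · simp [Set.indicator_of_notMem hp]
  calc pr μ₁ E₁ = pr μL S := h1.symm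
    _ ≤ ENNReal.ofReal (Real.exp ε) * pr μR S + δ := by
        rw [← tsub_le_iff_left]; exact key
    _ ≤ ENNReal.ofReal (Real.exp ε) * pr μ₂ E₂ + δ := by
        gcongr
end
end

section
/- The discrete Laplace mechanism is differentially private: for v₁, v₂ ∈ ℤ with |v₁ − v₂| ≤ k, and any event E ⊆ ℤ, Pr[L_ε(v₁) ∈ E] ≤ exp(k·ε)·Pr[L_ε(v₂) ∈ E]. -/
open scoped ENNReal

noncomputable section

/-- Density of the discrete Laplace mechanism centered at `v` with parameter `ε`. -/
def lap (ε : ℝ) (v : ℤ) : ℤ → ℝ≥0∞ :=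
  fun x => ENNReal.ofReal
    (((Real.exp ε - 1) / (Real.exp ε + 1)) * Real.exp (-ε * |(x : ℝ) - v|))

/-- Density of the one-sided (exponential) discrete Laplace mechanism centered at `v`. -/
def osLap (ε : ℝ) (v : ℤ) : ℤ → ℝ≥0∞ :=
  fun x => if v ≤ x then
      ENNReal.ofReal ((1 - Real.exp (-ε)) * Real.exp (-ε * ((x : ℝ) - v)))
    else 0

theorem stmt_11 (ε : ℝ) (hε : 0 < ε) (k : ℕ) (v₁ v₂ : ℤ)
    (hadj : |v₁ - v₂| ≤ (k : ℤ)) (E : Set ℤ) :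
    pr (lap ε v₁) E ≤ ENNReal.ofReal (Real.exp ((k : ℝ) * ε)) * pr (lap ε v₂) E := by
  unfold pr
  rw [← ENNReal.tsum_mul_left]
  refine ENNReal.tsum_le_tsum fun x => ?_
  unfold lap
  rw [← ENNReal.ofReal_mul (Real.exp_nonneg _)]
  refine ENNReal.ofReal_le_ofReal ?_
  rw [show Real.exp ((k:ℝ)*ε) * (((Real.exp ε - 1) / (Real.exp ε + 1)) * Real.exp (-ε * |((x:ℤ):ℝ) - v₂|)) = ((Real.exp ε - 1) / (Real.exp ε + 1)) * (Real.exp ((k:ℝ)*ε) * Real.exp (-ε * |((x:ℤ):ℝ) - v₂|)) by ring, ← Real.exp_add]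
  have hc : (0:ℝ) ≤ (Real.exp ε - 1) / (Real.exp ε + 1) := by
    apply div_nonneg
    · linarith [Real.add_one_le_exp ε]
    · positivity
  refine mul_le_mul_of_nonneg_left (Real.exp_le_exp.mpr ?_) hc
  have h1 : |((x:ℤ):ℝ) - v₂| ≤ |((x:ℤ):ℝ) - v₁| + (k:ℝ) := by
    have h2 : |(v₁:ℝ) - v₂| ≤ (k:ℝ) := by
      have : |((v₁ - v₂ : ℤ) : ℝ)| ≤ ((k:ℤ):ℝ) := by exact_mod_cast hadj
      push_cast at this ⊢
      linarith [this]
    calc |((x:ℤ):ℝ) - v₂| ≤ |((x:ℤ):ℝ) - v₁| + |(v₁:ℝ) - v₂| := abs_sub_le _ _ _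
      _ ≤ |((x:ℤ):ℝ) - v₁| + (k:ℝ) := by linarith
  nlinarith [mul_le_mul_of_nonneg_left h1 hε.le]
end
end

section
/- Generalized Laplace coupling: for all v₁, v₂, k ∈ ℤ, the distributions L_ε(v₁) and L_ε(v₂) are related by the (|k + v₁ − v₂|·ε, 0)-approximate lifting of the relation {(x₁,x₂) ∈ ℤ×ℤ | x₁ + k = x₂}. -/
open scoped ENNReal

noncomputable section

set_option maxHeartbeats 1000000 in
lemma lap_hasSum (ε : ℝ) (hε : 0 < ε) (v : ℤ) :
    HasSum (fun x : ℤ => ((Real.exp ε - 1) / (Real.exp ε + 1)) *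
      Real.exp (-ε * |(x : ℝ) - v|)) 1 := by
  have hE : 1 < Real.exp ε := Real.one_lt_exp_iff.mpr hε
  set C : ℝ := (Real.exp ε - 1) / (Real.exp ε + 1) with hC
  set r : ℝ := Real.exp (-ε) with hr
  have hr0 : 0 ≤ r := (Real.exp_pos _).le
  have hr1 : r < 1 := Real.exp_lt_one_iff.mpr (by linarith)
  set f : ℤ → ℝ := fun x => C * Real.exp (-ε * |(x : ℝ)|) with hf
  have key : HasSum f 1 := by
    have h1 : HasSum (fun n : ℕ => f n) (C * (1 - r)⁻¹) := by
      have := (hasSum_geometric_of_lt_one hr0 hr1).mul_left C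
      convert this using 2 with n
      · rfl
      rw [hf]
      simp only
      rw [hr, ← Real.exp_nat_mul]
      congr 1
      rw [abs_of_nonneg (by positivity)]
      push_cast; ring
    have h2 : HasSum (fun n : ℕ => f (-(n + 1))) (C * r * (1 - r)⁻¹) := by
      have := (hasSum_geometric_of_lt_one hr0 hr1).mul_left (C * r)
      convert this using 2 with n
      · rfl
      rw [hf]
      simp only
      rw [hr, ← Real.exp_nat_mul, mul_assoc, ← Real.exp_add]
      congr 1
      rw [show ((-((n : ℤ) + 1) : ℤ) : ℝ) = -((n : ℝ) + 1) by push_cast; ring,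
        abs_neg, abs_of_nonneg (by positivity)]
      ring
    have h3 := h1.of_nat_of_neg_add_one h2
    convert h3 using 1
    have h1r : (0:ℝ) < 1 - r := by linarith
    have hrE : r * Real.exp ε = 1 := by rw [hr, ← Real.exp_add]; simp
    rw [hC]
    field_simp
    nlinarith [hrE]
  apply (Equiv.addRight v).hasSum_iff.mp
  have hcomp : ((fun x : ℤ => C * Real.exp (-ε * |(x : ℝ) - v|)) ∘ ⇑(Equiv.addRight v)) = f := by
    funext x
    have hx : ((x + v : ℤ) : ℝ) - v = x := by push_cast; ring
    simp only [hf, Function.comp_apply, Equiv.coe_addRight, hx]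
  rw [hcomp]
  exact key

lemma lap_pointwise (ε : ℝ) (hε : 0 < ε) (v₁ v₂ k : ℤ) (x : ℤ) :
    lap ε v₁ x ≤ ENNReal.ofReal (Real.exp ((|((k + v₁ - v₂ : ℤ) : ℝ)|) * ε)) *
      lap ε v₂ (x + k) := by
  unfold lap
  rw [← ENNReal.ofReal_mul (Real.exp_nonneg _)]
  apply ENNReal.ofReal_le_ofReal
  have hE : 1 < Real.exp ε := Real.one_lt_exp_iff.mpr hε
  have hC : 0 ≤ (Real.exp ε - 1) / (Real.exp ε + 1) := div_nonneg (by linarith) (by positivity)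
  rw [show Real.exp ((|((k + v₁ - v₂ : ℤ) : ℝ)|) * ε) *
      ((Real.exp ε - 1) / (Real.exp ε + 1) * Real.exp (-ε * |((x + k : ℤ) : ℝ) - v₂|)) =
      (Real.exp ε - 1) / (Real.exp ε + 1) *
      (Real.exp ((|((k + v₁ - v₂ : ℤ) : ℝ)|) * ε) * Real.exp (-ε * |((x + k : ℤ) : ℝ) - v₂|))
      by ring, ← Real.exp_add]
  apply mul_le_mul_of_nonneg_left _ hC
  apply Real.exp_le_exp.mpr
  have habs : |((x + k : ℤ) : ℝ) - v₂| - |(x : ℝ) - v₁| ≤ |((k + v₁ - v₂ : ℤ) : ℝ)| := by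
    have h := abs_sub_abs_le_abs_sub (((x + k : ℤ) : ℝ) - v₂) ((x : ℝ) - v₁)
    have : ((x + k : ℤ) : ℝ) - v₂ - ((x : ℝ) - v₁) = ((k + v₁ - v₂ : ℤ) : ℝ) := by
      push_cast; ring
    rwa [this] at h
  nlinarith [habs, hε.le]

lemma lap_mass_le_one (ε : ℝ) (hε : 0 < ε) (v : ℤ) : (∑' x : ℤ, lap ε v x) ≤ 1 := by
  have hs := lap_hasSum ε hε v
  have hnn : ∀ x : ℤ, 0 ≤ ((Real.exp ε - 1) / (Real.exp ε + 1)) *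
      Real.exp (-ε * |(x : ℝ) - v|) := by
    intro x
    have hE : 1 < Real.exp ε := Real.one_lt_exp_iff.mpr hε
    exact mul_nonneg (div_nonneg (by linarith) (by positivity)) (Real.exp_nonneg _)
  unfold lap
  rw [← ENNReal.ofReal_tsum_of_nonneg hnn hs.summable, hs.tsum_eq]
  simp

theorem stmt_12 (ε : ℝ) (hε : 0 < ε) (v₁ v₂ k : ℤ) :
    ALift ((|((k + v₁ - v₂ : ℤ) : ℝ)|) * ε) 0
      {p : ℤ × ℤ | p.1 + k = p.2} (lap ε v₁) (lap ε v₂) := by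
  refine ⟨fun p => if p.2 = p.1 + k then lap ε v₁ p.1 else 0,
          fun p => if p.2 = p.1 + k then lap ε v₂ p.2 else 0,
          ?_, ?_, ?_, ?_, ?_, ?_, ?_⟩
  · -- mass μL ≤ 1
    unfold mass
    show (∑' p : ℤ × ℤ, if p.2 = p.1 + k then lap ε v₁ p.1 else 0) ≤ 1
    rw [ENNReal.tsum_prod']
    calc (∑' a : ℤ, ∑' b : ℤ, if b = a + k then lap ε v₁ a else 0)
        = ∑' a : ℤ, lap ε v₁ a := by
          congr 1; funext a; exact tsum_ite_eq (a + k) (fun _ => lap ε v₁ a)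
      _ ≤ 1 := lap_mass_le_one ε hε v₁
  · -- mass μR ≤ 1
    unfold mass
    show (∑' p : ℤ × ℤ, if p.2 = p.1 + k then lap ε v₂ p.2 else 0) ≤ 1
    rw [ENNReal.tsum_prod', ENNReal.tsum_comm]
    calc (∑' b : ℤ, ∑' a : ℤ, if b = a + k then lap ε v₂ b else 0)
        = ∑' b : ℤ, lap ε v₂ b := by
          congr 1; funext b
          refine tsum_eq_single (b - k) ?_ |>.trans (by simp)
          intro a ha
          show (if b = a + k then lap ε v₂ b else 0) = 0
          rw [if_neg]
          omega
      _ ≤ 1 := lap_mass_le_one ε hε v₂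
  · -- marg₁
    funext a
    exact tsum_ite_eq (a + k) (fun _ => lap ε v₁ a)
  · -- marg₂
    funext b
    refine tsum_eq_single (b - k) ?_ |>.trans (by simp)
    intro a ha
    show (if b = a + k then lap ε v₂ b else 0) = 0
    rw [if_neg]
    omega
  · -- support L
    rintro ⟨a, b⟩ h
    by_cases hb : b = a + k
    · simpa [Set.mem_setOf_eq] using hb.symm
    · simp [hb] at h
  · -- support R
    rintro ⟨a, b⟩ h
    by_cases hb : b = a + k
    · simpa [Set.mem_setOf_eq] using hb.symm
    · simp [hb] at h
  · -- dpDiv ≤ 0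
    unfold dpDiv
    refine iSup_le fun E => ?_
    rw [le_zero_iff, tsub_eq_zero_iff_le]
    unfold pr
    rw [← ENNReal.tsum_mul_left]
    refine ENNReal.tsum_le_tsum fun p => ?_
    show (if (p : ℤ × ℤ).2 = (p : ℤ × ℤ).1 + k then lap ε v₁ (p : ℤ × ℤ).1 else 0) ≤
      ENNReal.ofReal (Real.exp ((|((k + v₁ - v₂ : ℤ) : ℝ)|) * ε)) *
      (if (p : ℤ × ℤ).2 = (p : ℤ × ℤ).1 + k then lap ε v₂ (p : ℤ × ℤ).2 else 0)
    by_cases hb : (p : ℤ × ℤ).2 = (p : ℤ × ℤ).1 + k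
    · rw [if_pos hb, if_pos hb, hb]
      exact lap_pointwise ε hε v₁ v₂ k (p : ℤ × ℤ).1
    · rw [if_neg hb, if_neg hb]
      exact zero_le
end
end

section
/- One-sided Laplace shift coupling: let v₁, v₂, k ∈ ℤ with k ≥ v₂ − v₁. Then the distributions L⁺_ε(v₁) and L⁺_ε(v₂) are related by the ((k + v₁ − v₂)·ε, 0)-approximate lifting of {(x₁,x₂) ∈ ℤ×ℤ | x₁ + k = x₂}. -/
open scoped ENNReal

noncomputable section

lemma osLap_mass_le (ε : ℝ) (hε : 0 < ε) (v : ℤ) : (∑' x : ℤ, osLap ε v x) ≤ 1 := by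
  have hlt : Real.exp (-ε) < 1 := Real.exp_lt_one_iff.mpr (by linarith)
  have hpos : (0:ℝ) < 1 - Real.exp (-ε) := by linarith
  have hinj : Function.Injective (fun n : ℕ => v + (n : ℤ)) := by
    intro a b h; simpa using h
  have hsupp : Function.support (osLap ε v) ⊆ Set.range (fun n : ℕ => v + (n : ℤ)) := by
    intro x hx
    rw [Function.mem_support, osLap] at hx
    by_cases h : v ≤ x
    · exact ⟨(x - v).toNat, by simp; omega⟩
    · simp [h] at hx
  have key : (∑' x : ℤ, osLap ε v x) = ∑' n : ℕ, osLap ε v (v + n) :=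
    (hinj.tsum_eq hsupp).symm
  rw [key]
  have heval : ∀ n : ℕ, osLap ε v (v + n)
      = ENNReal.ofReal (1 - Real.exp (-ε)) * (ENNReal.ofReal (Real.exp (-ε)))^n := by
    intro n
    have : osLap ε v (v + n)
        = ENNReal.ofReal ((1 - Real.exp (-ε)) * Real.exp (-ε * n)) := by
      simp [osLap]
    rw [this, ENNReal.ofReal_mul hpos.le]
    congr 1
    rw [← ENNReal.ofReal_pow (Real.exp_nonneg _), ← Real.exp_nat_mul]
    ring_nf
  simp only [heval]
  rw [ENNReal.tsum_mul_left, ENNReal.tsum_geometric]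
  have h1 : (1 : ℝ≥0∞) - ENNReal.ofReal (Real.exp (-ε))
      = ENNReal.ofReal (1 - Real.exp (-ε)) := by
    rw [ENNReal.ofReal_sub _ (Real.exp_nonneg _), ENNReal.ofReal_one]
  rw [h1, ENNReal.mul_inv_cancel (ENNReal.ofReal_pos.mpr hpos).ne' ENNReal.ofReal_ne_top]

theorem stmt_15 (ε : ℝ) (hε : 0 < ε) (v₁ v₂ k : ℤ) (hk : v₂ - v₁ ≤ k) :
    ALift (((k + v₁ - v₂ : ℤ) : ℝ) * ε) 0
      {p : ℤ × ℤ | p.1 + k = p.2} (osLap ε v₁) (osLap ε v₂) := by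
  set C : ℝ≥0∞ := ENNReal.ofReal (Real.exp (((k + v₁ - v₂ : ℤ) : ℝ) * ε)) with hC
  set μL : ℤ × ℤ → ℝ≥0∞ := fun p => if p.1 + k = p.2 then osLap ε v₁ p.1 else 0 with hμL
  set μR : ℤ × ℤ → ℝ≥0∞ := fun p => if p.1 + k = p.2 then osLap ε v₂ p.2 else 0 with hμR
  have hLmarg : marg₁ μL = osLap ε v₁ := by
    funext b₁
    have : ∀ b₂ : ℤ, μL (b₁, b₂) = if b₂ = b₁ + k then osLap ε v₁ b₁ else 0 := by
      intro b₂; simp only [hμL]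
      rcases eq_or_ne (b₁ + k) b₂ with h | h
      · subst h; simp
      · simp [h, h.symm]
    simp only [marg₁, this, tsum_ite_eq]
  have hRmarg : marg₂ μR = osLap ε v₂ := by
    funext b₂
    have : ∀ b₁ : ℤ, μR (b₁, b₂) = if b₁ = b₂ - k then osLap ε v₂ b₂ else 0 := by
      intro b₁; simp only [hμR]
      congr 1
      simp [eq_comm, sub_eq_iff_eq_add, eq_sub_iff_add_eq]
    simp only [marg₂, this, tsum_ite_eq]
  have hpoint : ∀ p : ℤ × ℤ, μL p ≤ C * μR p := by
    rintro ⟨x, y⟩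
    simp only [hμL, hμR]
    by_cases h : x + k = y
    · simp only [h, if_pos rfl]
      by_cases h1 : v₁ ≤ x
      · have h2 : v₂ ≤ y := by omega
        simp only [osLap, h1, h2, if_true, hC]
        rw [← ENNReal.ofReal_mul (Real.exp_nonneg _)]
        apply ENNReal.ofReal_le_ofReal
        rw [mul_comm (Real.exp _), mul_assoc, ← Real.exp_add]
        have hy : (y : ℝ) = x + k := by rw [← h]; push_cast; ring
        apply mul_le_mul_of_nonneg_left _ (by linarith [Real.exp_lt_one_iff.mpr (neg_lt_zero.mpr hε)])
        apply le_of_eq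
        congr 1
        rw [hy]
        push_cast
        ring
      · rw [osLap, if_neg h1]; exact zero_le
    · simp [h]
  refine ⟨μL, μR, ?_, ?_, hLmarg, hRmarg, ?_, ?_, ?_⟩
  · rw [mass]
    have hp : ∑' (p : ℤ × ℤ), μL p = ∑' x, ∑' y, μL (x, y) := ENNReal.tsum_prod (f := fun x y => μL (x, y))
    rw [hp]
    calc ∑' x, ∑' y, μL (x, y) = ∑' x, osLap ε v₁ x := by
          refine tsum_congr fun x => ?_
          have : ∀ y : ℤ, μL (x, y) = if y = x + k then osLap ε v₁ x else 0 := by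
            intro y; simp only [hμL]
            rcases eq_or_ne (x + k) y with h | h
            · subst h; simp
            · simp [h, h.symm]
          simp only [this, tsum_ite_eq]
      _ ≤ 1 := osLap_mass_le ε hε v₁
  · rw [mass]
    have hp : ∑' (p : ℤ × ℤ), μR p = ∑' x, ∑' y, μR (x, y) := ENNReal.tsum_prod (f := fun x y => μR (x, y))
    rw [hp]
    calc ∑' x, ∑' y, μR (x, y) = ∑' x : ℤ, osLap ε v₂ (x + k) := by
          refine tsum_congr fun x => ?_
          have : ∀ y : ℤ, μR (x, y) = if y = x + k then osLap ε v₂ (x + k) else 0 := by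
            intro y; simp only [hμR]
            by_cases hy : x + k = y
            · simp [hy]
            · simp [hy, Ne.symm hy]
          simp only [this, tsum_ite_eq]
      _ = ∑' x : ℤ, osLap ε v₂ x := (Equiv.addRight k).tsum_eq (osLap ε v₂)
      _ ≤ 1 := osLap_mass_le ε hε v₂
  · intro p hp
    simp only [hμL] at hp
    by_cases h : p.1 + k = p.2
    · exact h
    · simp [h] at hp
  · intro p hp
    simp only [hμR] at hp
    by_cases h : p.1 + k = p.2
    · exact h
    · simp [h] at hp
  · rw [dpDiv]
    apply iSup_le
    intro E
    rw [tsub_le_iff_right, zero_add]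
    calc pr μL E ≤ ∑' b : E, C * μR b := ENNReal.tsum_le_tsum fun b => hpoint b
      _ = C * pr μR E := by rw [ENNReal.tsum_mul_left]; rfl
end
end

section
/- Transitivity/composition of approximate liftings under sequential composition: if M : D → Distr(R) is (ε,δ)-differentially private and M' : D → R → Distr(R') is such that for each fixed r ∈ R, d ↦ M'(d)(r) is (ε',δ')-differentially private, then d ↦ bind (M d) (M' d) is (ε+ε', δ+δ')-differentially private. -/
open scoped ENNReal

noncomputable section

/-- Monadic bind of discrete distributions. -/
def dbind {R R' : Type*} (μ : R → ℝ≥0∞) (f : R → R' → ℝ≥0∞) : R' → ℝ≥0∞ :=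
  fun b' => ∑' r, μ r * f r b'

lemma pr_le_mass {B : Type*} (μ : B → ℝ≥0∞) (E : Set B) : pr μ E ≤ mass μ := by
  rw [pr, tsum_subtype]
  exact ENNReal.tsum_le_tsum fun b => Set.indicator_le_self E μ b

lemma key {R : Type*} (c δ : ℝ≥0∞) (hc : c ≠ ∞) (μ ν h : R → ℝ≥0∞)
    (hν : mass ν ≤ 1) (hh : ∀ r, h r ≤ 1)
    (hdp : ∀ E : Set R, pr μ E ≤ c * pr ν E + δ) :
    ∑' r, μ r * h r ≤ c * ∑' r, ν r * h r + δ := by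
  set B : Set R := {r | c * ν r < μ r} with hB
  have hsub : ∑' r, (μ r - c * ν r) ≤ δ := by
    have hsupp : Function.support (fun r => μ r - c * ν r) ⊆ B := by
      intro r hr
      simp only [Function.mem_support] at hr
      by_contra hrB
      exact hr (tsub_eq_zero_of_le (not_lt.mp hrB))
    rw [← tsum_subtype_eq_of_support_subset hsupp]
    have hcν : ∑' r : B, c * ν r = c * pr ν B := by rw [pr, ENNReal.tsum_mul_left]
    have hfin : ∑' r : B, c * ν r ≠ ∞ := by
      rw [hcν]
      exact ENNReal.mul_ne_top hc
        (ne_top_of_le_ne_top ENNReal.one_ne_top ((pr_le_mass ν B).trans hν))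
    have hle : ∀ r : B, c * ν r ≤ μ r := fun r => (r.2 : c * ν r.1 < μ r.1).le
    have hsplit : (∑' r : B, (μ r - c * ν r)) + ∑' r : B, c * ν r = pr μ B := by
      rw [← ENNReal.tsum_add, pr]
      exact tsum_congr fun r => tsub_add_cancel_of_le (hle r)
    have := hdp B
    rw [← hsplit, hcν] at this
    rw [add_comm] at this
    exact (ENNReal.add_le_add_iff_left (hcν ▸ hfin)).mp this
  calc ∑' r, μ r * h r
      ≤ ∑' r, (min (μ r) (c * ν r) * h r + (μ r - c * ν r)) := by
        refine ENNReal.tsum_le_tsum fun r => ?_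
        calc μ r * h r ≤ (min (μ r) (c * ν r) + (μ r - c * ν r)) * h r := by
              gcongr
              rcases le_total (μ r) (c * ν r) with hle | hle
              · rw [min_eq_left hle]; exact le_self_add
              · rw [min_eq_right hle, add_tsub_cancel_of_le hle]
          _ = min (μ r) (c * ν r) * h r + (μ r - c * ν r) * h r := add_mul _ _ _
          _ ≤ min (μ r) (c * ν r) * h r + (μ r - c * ν r) := by
              gcongr
              calc (μ r - c * ν r) * h r ≤ (μ r - c * ν r) * 1 := by gcongr; exact hh r
                _ = _ := mul_one _
    _ = (∑' r, min (μ r) (c * ν r) * h r) + ∑' r, (μ r - c * ν r) := ENNReal.tsum_add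
    _ ≤ (∑' r, c * (ν r * h r)) + δ := by
        refine add_le_add (ENNReal.tsum_le_tsum fun r => ?_) hsub
        rw [← mul_assoc]
        gcongr
        exact min_le_right _ _
    _ = c * ∑' r, ν r * h r + δ := by rw [ENNReal.tsum_mul_left]

lemma pr_dbind {R R' : Type*} (μ : R → ℝ≥0∞) (f : R → R' → ℝ≥0∞) (E : Set R') :
    pr (dbind μ f) E = ∑' r, μ r * pr (f r) E := by
  rw [pr]
  simp only [dbind]
  rw [ENNReal.tsum_comm]
  exact tsum_congr fun r => by rw [pr, ENNReal.tsum_mul_left]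

theorem stmt_17 {D R R' : Type*} [Countable R] [Countable R']
    (ε ε' : ℝ) (δ δ' : ℝ≥0∞) (Φ : D → D → Prop)
    (M : D → R → ℝ≥0∞) (M' : D → R → R' → ℝ≥0∞)
    (hM : ∀ d, mass (M d) = 1) (hM' : ∀ d r, mass (M' d r) = 1)
    (hMdp : ∀ d d' : D, Φ d d' → ∀ E : Set R,
      pr (M d) E ≤ ENNReal.ofReal (Real.exp ε) * pr (M d') E + δ)
    (hM'dp : ∀ r : R, ∀ d d' : D, Φ d d' → ∀ E : Set R',
      pr (M' d r) E ≤ ENNReal.ofReal (Real.exp ε') * pr (M' d' r) E + δ') :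
    ∀ d d' : D, Φ d d' → ∀ E : Set R',
      pr (dbind (M d) (M' d)) E ≤
        ENNReal.ofReal (Real.exp (ε + ε')) * pr (dbind (M d') (M' d')) E + (δ + δ') := by
  intro d d' hΦ E
  set c := ENNReal.ofReal (Real.exp ε) with hc
  set c' := ENNReal.ofReal (Real.exp ε') with hc'
  set f : R → ℝ≥0∞ := fun r => pr (M' d r) E with hf
  set g : R → ℝ≥0∞ := fun r => pr (M' d' r) E with hg
  set h : R → ℝ≥0∞ := fun r => min (f r) (c' * g r) with hh
  have hf1 : ∀ r, f r ≤ 1 := fun r => (pr_le_mass _ _).trans (hM' d r).le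
  have hfh : ∀ r, f r ≤ h r + δ' := by
    intro r
    rcases le_total (f r) (c' * g r) with hle | hle
    · rw [hh]; simp only [min_eq_left hle]; exact le_self_add
    · rw [hh]; simp only [min_eq_right hle]; exact hM'dp r d d' hΦ E
  have step1 : pr (dbind (M d) (M' d)) E ≤ (∑' r, M d r * h r) + δ' := by
    rw [pr_dbind]
    calc ∑' r, M d r * f r ≤ ∑' r, M d r * (h r + δ') := by
          exact ENNReal.tsum_le_tsum fun r => by gcongr; exact hfh r
      _ = (∑' r, M d r * h r) + ∑' r, M d r * δ' := by
          simp only [mul_add]; exact ENNReal.tsum_add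
      _ = (∑' r, M d r * h r) + δ' := by
          have h1 : ∑' r, M d r = 1 := hM d
          rw [ENNReal.tsum_mul_right, h1, one_mul]
  have step2 : ∑' r, M d r * h r ≤ c * ∑' r, M d' r * h r + δ := by
    refine key c δ ENNReal.ofReal_ne_top (M d) (M d') h (hM d').le
      (fun r => (min_le_left _ _).trans (hf1 r)) (hMdp d d' hΦ)
  have step3 : ∑' r, M d' r * h r ≤ c' * ∑' r, M d' r * g r := by
    rw [← ENNReal.tsum_mul_left]
    refine ENNReal.tsum_le_tsum fun r => ?_
    rw [← mul_assoc, mul_comm c' (M d' r), mul_assoc]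
    gcongr
    exact min_le_right _ _
  calc pr (dbind (M d) (M' d)) E ≤ (∑' r, M d r * h r) + δ' := step1
    _ ≤ (c * ∑' r, M d' r * h r + δ) + δ' := by gcongr
    _ ≤ (c * (c' * ∑' r, M d' r * g r) + δ) + δ' := by gcongr
    _ = ENNReal.ofReal (Real.exp (ε + ε')) * pr (dbind (M d') (M' d')) E + (δ + δ') := by
        rw [pr_dbind, ← mul_assoc, hc, hc', ← ENNReal.ofReal_mul (Real.exp_nonneg ε),
          ← Real.exp_add, add_assoc]
end
end
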